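/- arXiv:2305.03578 — 4 statements merged into one kernel-verified Lean document; each statement's English description precedes it below -/
import Mathlib

section
/- Let A be a (not necessarily commutative) Poisson algebra, i.e. an associative unital algebra equipped with a bilinear bracket {-,-} that is antisymmetric, satisfies the Jacobi identity, and satisfies the Leibniz rule {a·b, c} = a·{b,c} + {a,c}·b. Then for all a, b, c, d in A one has (a·c − c·a)·{b,d} = {a,c}·(b·d − d·b). -/
/-- **Ginzburg–Voronov lemma.** If `A` is any (not necessarily commutative) Poisson
algebra, then for all `a b c d : A` we have `[a,c] ⬝ {b,d} = {a,c} ⬝ [b,d]`. -/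
theorem ginzburg_voronov (K A : Type*) [Field K] [Ring A] [Algebra K A]
    (B : A →ₗ[K] A →ₗ[K] A)
    (anti : ∀ a b : A, B a b = - B b a)
    (jacobi : ∀ a b c : A, B (B a b) c + B (B b c) a + B (B c a) b = 0)
    (leibniz : ∀ a b c : A, B (a * b) c = a * B b c + B a c * b) :
    ∀ a b c d : A, (a * c - c * a) * B b d = B a c * (b * d - d * b) := by
  have rl : ∀ a b c : A, B c (a * b) = a * B c b + B c a * b := by
    intro a b c
    rw [anti c (a * b), leibniz, anti b c, anti a c]
    noncomm_ring
  intro a b c d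
  have h1 : B (a * b) (c * d) = a * (c * B b d + B b c * d) + (c * B a d + B a c * d) * b := by
    rw [leibniz, rl c d b, rl c d a]
  have h2 : B (a * b) (c * d) = c * (a * B b d + B a d * b) + (a * B b c + B a c * b) * d := by
    rw [rl c d (a * b), leibniz, leibniz]
  have h3 : a * (c * B b d + B b c * d) + (c * B a d + B a c * d) * b
      - (c * (a * B b d + B a d * b) + (a * B b c + B a c * b) * d) = 0 :=
    sub_eq_zero_of_eq (h1.symm.trans h2)
  have h4 : (a * c - c * a) * B b d - B a c * (b * d - d * b)
      = a * (c * B b d + B b c * d) + (c * B a d + B a c * d) * b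
      - (c * (a * B b d + B a d * b) + (a * B b c + B a c * b) * d) := by
    noncomm_ring
  rw [h3] at h4
  exact sub_eq_zero.mp h4
end

section
/- Let A be a Poisson algebra over a field K of characteristic 0 which is an integral domain (no zero divisors). Then Cas(A) is integrally closed in A: if a ∈ A satisfies p(a) = 0 for some monic polynomial p in one variable with all coefficients in Cas(A), then a ∈ Cas(A). -/
/-!
For each `b`, the Hamiltonian map `d = {b, -}` is a derivation killing the coefficients of `p`, so
`d (p(a)) = p'(a) * d a`, and the same holds for every derivative of `p`. If `d a ≠ 0`, cancelling
it in a domain shows inductively that all derivatives of `p` vanish at `a`. In characteristic zero,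
a root of `p ≠ 0` at which the first `n` derivatives vanish has multiplicity greater than `n`;
taking `n` to be the multiplicity of `a` itself gives a contradiction.
-/

open Polynomial

namespace Derivation

variable {R A : Type*} [CommRing R] [CommRing A] [Algebra R A] (d : Derivation R A A)
  {p : A[X]}

theorem apply_eval_of_apply_coeff_eq_zero (hcoeff : ∀ n, d (p.coeff n) = 0) (x : A) :
    d (p.eval x) = p.derivative.eval x * d x := by
  have hmap : d.mapCoeffs p = 0 := by
    ext n
    simp [hcoeff]
  rw [apply_eval_eq, hmap, map_zero, zero_add, smul_eq_mul]

theorem apply_coeff_derivative_eq_zero (hcoeff : ∀ n, d (p.coeff n) = 0) (n : ℕ) :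
    d (p.derivative.coeff n) = 0 := by
  rw [coeff_derivative, leibniz, hcoeff, ← Nat.cast_succ, map_natCast, smul_zero, smul_zero,
    add_zero]

theorem apply_coeff_iterate_derivative_eq_zero (hcoeff : ∀ n, d (p.coeff n) = 0) (m n : ℕ) :
    d ((derivative^[m] p).coeff n) = 0 := by
  induction m generalizing n with
  | zero => exact hcoeff n
  | succ m ih =>
    rw [Function.iterate_succ_apply']
    exact d.apply_coeff_derivative_eq_zero ih n

variable [NoZeroDivisors A] [CharZero A]

theorem apply_eq_zero_of_isRoot (hp : p ≠ 0) (hcoeff : ∀ n, d (p.coeff n) = 0) {x : A}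
    (hx : p.IsRoot x) : d x = 0 := by
  by_contra hdx
  have hroots : ∀ m, (derivative^[m] p).IsRoot x := by
    intro m
    induction m with
    | zero => exact hx
    | succ m ih =>
      have h := d.apply_eval_of_apply_coeff_eq_zero
        (d.apply_coeff_iterate_derivative_eq_zero hcoeff m) x
      rw [ih.eq_zero, map_zero, eq_comm, mul_eq_zero, or_iff_left hdx] at h
      rwa [Function.iterate_succ_apply', IsRoot]
  exact (lt_rootMultiplicity_of_isRoot_iterate_derivative hp fun m _ ↦ hroots m).false

end Derivation

def hamiltonianDerivation {K A : Type*} [CommSemiring K] [CommRing A] [Algebra K A]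
    (B : A →ₗ[K] A →ₗ[K] A) (anti : ∀ a b : A, B a b = - B b a)
    (leibniz : ∀ a b c : A, B (a * b) c = a * B b c + B a c * b) (b : A) :
    Derivation K A A :=
  Derivation.mk' (B b) fun x y ↦ by
    rw [anti, leibniz, anti x, anti y, smul_eq_mul, smul_eq_mul]
    ring

theorem casimirs_integrally_closed_general (K A : Type*) [Field K] [CharZero K]
    [CommRing A] [IsDomain A] [Algebra K A]
    (B : A →ₗ[K] A →ₗ[K] A)
    (anti : ∀ a b : A, B a b = - B b a)
    (leibniz : ∀ a b c : A, B (a * b) c = a * B b c + B a c * b)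
    (a : A) (p : Polynomial A) (hmonic : p.Monic)
    (hcas : ∀ n : ℕ, ∀ b : A, B b (p.coeff n) = 0)
    (hroot : p.eval a = 0) :
    ∀ b : A, B b a = 0 := by
  have : CharZero A := charZero_of_injective_algebraMap (algebraMap K A).injective
  intro b
  exact (hamiltonianDerivation B anti leibniz b).apply_eq_zero_of_isRoot hmonic.ne_zero
    (fun n ↦ hcas n b) hroot

/-- Let `A` be a Poisson algebra over a field `K` of characteristic `0` which is an
integral domain.  Then `Cas(A)` is integrally closed in `A`: if `a : A` is a root of a
monic polynomial all of whose coefficients are Casimir elements, then `a` is a Casimir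
element. -/
theorem casimirs_integrally_closed (K A : Type*) [Field K] [CharZero K]
    [CommRing A] [IsDomain A] [Algebra K A]
    (B : A →ₗ[K] A →ₗ[K] A)
    (anti : ∀ a b : A, B a b = - B b a)
    (jacobi : ∀ a b c : A, B (B a b) c + B (B b c) a + B (B c a) b = 0)
    (leibniz : ∀ a b c : A, B (a * b) c = a * B b c + B a c * b)
    (a : A) (p : Polynomial A) (hmonic : p.Monic)
    (hcas : ∀ n : ℕ, ∀ b : A, B b (p.coeff n) = 0)
    (hroot : p.eval a = 0) :
    ∀ b : A, B b a = 0 :=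
  casimirs_integrally_closed_general K A B anti leibniz a p hmonic hcas hroot
end

section
/- Let A = ℂ[x_1, …, x_n] with n ≥ 2 and fix f_1, …, f_{n−2} ∈ A. Then the Nambu–Jacobi–Poisson bracket {F, G} := det Jac(F, G, f_1, …, f_{n−2}) makes A into a Poisson algebra: the bracket is bilinear, antisymmetric, satisfies the Leibniz rule {F·G, H} = F·{G,H} + {F,H}·G, and satisfies the Jacobi identity {{F,G},H} + {{G,H},F} + {{H,F},G} = 0. -/
open MvPolynomial

/-- The Nambu–Jacobi–Poisson bracket on `ℂ[x₁, …, x_n]` determined by fixed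
polynomials `f₁, …, f_{n−2}`: `{F, G} = det Jac(F, G, f₁, …, f_{n−2})`. -/
noncomputable def njpBracket (n : ℕ) (f : Fin (n - 2) → MvPolynomial (Fin n) ℂ)
    (F G : MvPolynomial (Fin n) ℂ) : MvPolynomial (Fin n) ℂ :=
  (Matrix.of fun j k : Fin n =>
    pderiv k
      (if h0 : (j : ℕ) = 0 then F
       else if h1 : (j : ℕ) = 1 then G
       else f ⟨(j : ℕ) - 2, by omega⟩)).det

/-! Fix `g : ι → S` and a slot `i`. The map `x ↦ det Jac(g₁, …, x, …, gₙ)` (with `x` in slot `i`)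
is the vector field `X = Σₗ (adj Jac g)ₗᵢ ∂ₗ`. Reading the Lie derivative of
`dh₁ ∧ ⋯ ∧ dhₙ = det Jac(h) · vol` in coordinates gives, for every vector field `X`,
`X (det Jac h) + (div X) · det Jac h = Σⱼ det Jac(h₁, …, X hⱼ, …, hₙ)`,
and `div X = 0` by the Piola identity: the Hessians are symmetric while the determinant is
alternating. So the Hamiltonian vector field `{·, H}` is a derivation of the bracket; since it kills
each `f_k` (a repeated row), this is `{{F, G}, H} = {{F, H}, G} + {F, {G, H}}`, which with
antisymmetry is the Jacobi identity. Bilinearity and the Leibniz rule hold because `{·, H}` is a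
derivation. -/

open Matrix Function

namespace Matrix

variable {ι R : Type*} [Fintype ι] [DecidableEq ι] [CommRing R]

theorem det_updateRow_eq_vecMul_adjugate (A : Matrix ι ι R) (i : ι) (v : ι → R) :
    (A.updateRow i v).det = (v ᵥ* A.adjugate) i := by
  rw [← cramer_transpose_apply, cramer_eq_adjugate_mulVec, ← adjugate_transpose, mulVec_transpose]

theorem sum_det_updateRow_vecMul (A N : Matrix ι ι R) :
    ∑ i, (A.updateRow i (A i ᵥ* N)).det = N.trace * A.det := by
  simp_rw [det_updateRow_eq_vecMul_adjugate, vecMul_vecMul]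
  rw [show ∑ i, (A i ᵥ* (N * A.adjugate)) i = (A * (N * A.adjugate)).trace from rfl,
    ← Matrix.mul_assoc, trace_mul_cycle, adjugate_mul, Matrix.smul_mul, one_mul, trace_smul,
    smul_eq_mul, mul_comm]

theorem det_updateRow_updateRow_swap (A : Matrix ι ι R) {i j : ι} (hij : i ≠ j) (u v : ι → R) :
    ((A.updateRow i u).updateRow j v).det = -((A.updateRow i v).updateRow j u).det := by
  have hswap : (A.updateRow i u).updateRow j v
      = ((A.updateRow i v).updateRow j u).submatrix (Equiv.swap i j) id := by
    ext x y
    simp only [submatrix_apply, id_eq, updateRow_apply, Equiv.swap_apply_def]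
    split_ifs <;> simp_all
  rw [hswap, det_permute, Equiv.Perm.sign_swap hij]
  simp

end Matrix

theorem Fintype.sum_sum_mul_eq_zero_of_symm_of_alternating {ι R : Type*} [Fintype ι] [CommRing R]
    (W β : ι → ι → R) (hW : ∀ l m, W l m = W m l) (hβ : ∀ l m, β l m = -β m l)
    (hβ' : ∀ l, β l l = 0) : ∑ l, ∑ m, W l m * β l m = 0 := by
  rw [← Finset.sum_product']
  refine Finset.sum_involution (fun p _ => p.swap) (fun p _ => ?_) (fun p _ hp => ?_)
    (fun p _ => Finset.mem_univ _) (fun p _ => Prod.swap_swap p)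
  · simp [hW p.2 p.1, hβ p.2 p.1]
  · rintro heq
    obtain ⟨l, m⟩ := p
    obtain rfl : m = l := congrArg Prod.fst heq
    simp [hβ'] at hp

namespace Derivation

variable {ι R S : Type*} [CommRing R] [CommRing S] [Algebra R S] [DecidableEq ι]

theorem map_prod (D : Derivation R S S) (s : Finset ι) (f : ι → S) :
    D (∏ i ∈ s, f i) = ∑ i ∈ s, ∏ j ∈ s, update f i (D (f i)) j := by
  induction s using Finset.induction_on with
  | empty => simp
  | insert a s ha ih =>
    have hne : ∀ i ∈ s, i ≠ a := fun i hi h => ha (h ▸ hi)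
    have hrest : ∀ i ∈ s, ∏ j ∈ insert a s, update f i (D (f i)) j
        = f a * ∏ j ∈ s, update f i (D (f i)) j := fun i hi => by
      rw [Finset.prod_insert ha, update_of_ne (hne i hi).symm]
    rw [Finset.prod_insert ha, leibniz, ih, Finset.sum_insert ha, Finset.sum_congr rfl hrest,
      Finset.prod_insert ha, update_self,
      Finset.prod_congr rfl fun j hj => update_of_ne (hne j hj) _ _, ← Finset.mul_sum,
      smul_eq_mul, smul_eq_mul, add_comm, mul_comm]

variable [Fintype ι]

theorem map_det (D : Derivation R S S) (A : Matrix ι ι S) :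
    D A.det = ∑ p, (A.updateRow p fun k => D (A p k)).det := by
  simp_rw [Matrix.det_apply, map_sum, Units.smul_def, map_zsmul, map_prod, Finset.smul_sum]
  conv_rhs => rw [Finset.sum_comm]
  refine Finset.sum_congr rfl fun σ _ => ?_
  conv_rhs => rw [← Equiv.sum_comp σ]
  refine Finset.sum_congr rfl fun i _ => congrArg _ (Finset.prod_congr rfl fun j _ => ?_)
  by_cases h : j = i <;> simp [h, Matrix.updateRow_apply, σ.injective.eq_iff]

end Derivation

section VectorField

variable {ι R S : Type*} [Fintype ι] [CommRing R] [CommRing S] [Algebra R S]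
  (d : ι → Derivation R S S)

def vectorField (c : ι → S) : Derivation R S S := ∑ l, c l • d l

theorem vectorField_apply (c : ι → S) (x : S) : vectorField d c x = ∑ l, c l * d l x := by
  rw [vectorField, ← Derivation.coeFnAddMonoidHom_apply, map_sum]
  simp

def divergence (c : ι → S) : S := ∑ l, d l (c l)

end VectorField

section Jacobian

variable {ι R S : Type*} [CommRing R] [CommRing S] [Algebra R S] (d : ι → Derivation R S S)

def jacobianMatrix (g : ι → S) : Matrix ι ι S := Matrix.of fun i k => d k (g i)

variable [DecidableEq ι]

theorem jacobianMatrix_update (g : ι → S) (i : ι) (x : S) :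
    jacobianMatrix d (update g i x) = (jacobianMatrix d g).updateRow i fun k => d k x := by
  ext j k
  by_cases h : j = i <;> simp [jacobianMatrix, h, Matrix.updateRow_apply]

variable [Fintype ι]

theorem vectorField_apply_det_jacobianMatrix (hd : ∀ k l x, d k (d l x) = d l (d k x))
    (c g : ι → S) :
    vectorField d c (jacobianMatrix d g).det + divergence d c * (jacobianMatrix d g).det
      = ∑ j, (jacobianMatrix d (update g j (vectorField d c (g j)))).det := by
  have hrow : ∀ j, (fun k => d k (vectorField d c (g j)))
      = (fun k => vectorField d c (jacobianMatrix d g j k))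
        + jacobianMatrix d g j ᵥ* Matrix.of fun l k => d k (c l) := by
    intro j
    ext k
    simp only [vectorField_apply, map_sum, Derivation.leibniz, smul_eq_mul, Finset.sum_add_distrib,
      hd k, Pi.add_apply, vecMul, dotProduct, jacobianMatrix, Matrix.of_apply]
  simp_rw [jacobianMatrix_update, hrow, Matrix.det_updateRow_add, Finset.sum_add_distrib,
    ← Derivation.map_det, Matrix.sum_det_updateRow_vecMul]
  rfl

def hamiltonian (g : ι → S) (i : ι) : Derivation R S S :=
  vectorField d fun l => (jacobianMatrix d g).adjugate l i

theorem hamiltonian_apply (g : ι → S) (i : ι) (x : S) :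
    hamiltonian d g i x = (jacobianMatrix d (update g i x)).det := by
  rw [jacobianMatrix_update, Matrix.det_updateRow_eq_vecMul_adjugate, hamiltonian,
    vectorField_apply]
  simp [vecMul, dotProduct, mul_comm]

theorem divergence_adjugate_jacobianMatrix (hd : ∀ k l x, d k (d l x) = d l (d k x))
    (g : ι → S) (i : ι) : divergence d (fun l => (jacobianMatrix d g).adjugate l i) = 0 := by
  simp only [divergence, Matrix.adjugate_apply, Derivation.map_det]
  rw [Finset.sum_comm]
  refine Finset.sum_eq_zero fun p _ => ?_
  by_cases hp : p = i
  · subst hp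
    refine Finset.sum_eq_zero fun l _ => Matrix.det_eq_zero_of_row_eq_zero p fun k => ?_
    by_cases hk : k = l <;> simp [Pi.single_apply, hk]
  · set A := jacobianMatrix d g
    have hexp : ∀ l, ((A.updateRow i (Pi.single l 1)).updateRow p
          fun k => d l ((A.updateRow i (Pi.single l 1)) p k)).det
        = ∑ m, d l (d m (g p))
            * ((A.updateRow i (Pi.single l 1)).updateRow p (Pi.single m 1)).det := by
      intro l
      rw [Matrix.det_updateRow_eq_vecMul_adjugate]
      simp only [vecMul, dotProduct, Matrix.adjugate_apply, Matrix.updateRow_ne hp, A,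
        jacobianMatrix, Matrix.of_apply, hd l]
    simp only [hexp]
    refine Fintype.sum_sum_mul_eq_zero_of_symm_of_alternating _ _ (fun l m => hd l m (g p))
      (fun l m => Matrix.det_updateRow_updateRow_swap _ (Ne.symm hp) _ _)
      (fun l => Matrix.det_zero_of_row_eq (Ne.symm hp) ?_)
    simp [Matrix.updateRow_ne (Ne.symm hp)]

theorem hamiltonian_apply_det_jacobianMatrix (hd : ∀ k l x, d k (d l x) = d l (d k x))
    (g h : ι → S) (i : ι) :
    hamiltonian d g i (jacobianMatrix d h).det
      = ∑ j, (jacobianMatrix d (update h j (hamiltonian d g i (h j)))).det := by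
  have := vectorField_apply_det_jacobianMatrix d hd (fun l => (jacobianMatrix d g).adjugate l i) h
  rwa [divergence_adjugate_jacobianMatrix d hd, zero_mul, add_zero] at this

end Jacobian

section NambuBracket

variable {ι R S : Type*} [Fintype ι] [DecidableEq ι] [CommRing R] [CommRing S] [Algebra R S]
  (d : ι → Derivation R S S) (g : ι → S)

def nambuBracket (i j : ι) (F G : S) : S := (jacobianMatrix d (update (update g i F) j G)).det

variable {i j : ι}

theorem nambuBracket_eq_hamiltonian_left (hij : i ≠ j) (F G : S) :
    nambuBracket d g i j F G = hamiltonian d (update g j G) i F := by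
  rw [hamiltonian_apply, update_comm hij.symm, nambuBracket]

theorem nambuBracket_eq_hamiltonian_right (F G : S) :
    nambuBracket d g i j F G = hamiltonian d (update g i F) j G :=
  (hamiltonian_apply d _ j G).symm

theorem nambuBracket_swap (hij : i ≠ j) (F G : S) :
    nambuBracket d g i j F G = -nambuBracket d g i j G F := by
  simp only [nambuBracket, jacobianMatrix_update]
  exact Matrix.det_updateRow_updateRow_swap _ hij _ _

theorem nambuBracket_mul_left (hij : i ≠ j) (F G H : S) :
    nambuBracket d g i j (F * G) H
      = F * nambuBracket d g i j G H + nambuBracket d g i j F H * G := by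
  simp only [nambuBracket_eq_hamiltonian_left d g hij, Derivation.leibniz, smul_eq_mul]
  ring

theorem nambuBracket_nambuBracket_left (hij : i ≠ j) (hd : ∀ k l x, d k (d l x) = d l (d k x))
    (F G H : S) :
    nambuBracket d g i j (nambuBracket d g i j F G) H
      = nambuBracket d g i j (nambuBracket d g i j F H) G
        + nambuBracket d g i j F (nambuBracket d g i j G H) := by
  have hfixed : ∀ k, k ≠ i → k ≠ j → hamiltonian d (update g j H) i (g k) = 0 := by
    intro k hki hkj
    rw [hamiltonian_apply]
    refine Matrix.det_zero_of_row_eq hki.symm (funext fun l => ?_)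
    simp [jacobianMatrix, hki, hkj]
  rw [nambuBracket_eq_hamiltonian_left d g hij _ H, nambuBracket,
    hamiltonian_apply_det_jacobianMatrix d hd, Fintype.sum_eq_add i j hij]
  · simp [← nambuBracket_eq_hamiltonian_left d g hij, nambuBracket, update_comm hij, hij]
  · rintro k ⟨hki, hkj⟩
    rw [update_of_ne hkj, update_of_ne hki, hfixed k hki hkj, ← hamiltonian_apply, map_zero]

theorem nambuBracket_jacobi (hij : i ≠ j) (hd : ∀ k l x, d k (d l x) = d l (d k x)) (F G H : S) :
    nambuBracket d g i j (nambuBracket d g i j F G) H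
      + nambuBracket d g i j (nambuBracket d g i j G H) F
      + nambuBracket d g i j (nambuBracket d g i j H F) G = 0 := by
  rw [nambuBracket_nambuBracket_left d g hij hd, nambuBracket_swap d g hij F H,
    nambuBracket_swap d g hij F (nambuBracket d g i j G H),
    nambuBracket_eq_hamiltonian_left d g hij (-_), map_neg,
    ← nambuBracket_eq_hamiltonian_left d g hij]
  ring

end NambuBracket

theorem MvPolynomial.pderiv_pderiv_comm {σ R : Type*} [CommRing R] (i j : σ)
    (p : MvPolynomial σ R) :
    pderiv i (pderiv j p) = pderiv j (pderiv i p) := by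
  classical
  have : ⁅pderiv i, pderiv j⁆ = (0 : Derivation R (MvPolynomial σ R) (MvPolynomial σ R)) :=
    derivation_ext fun k => by
      rw [Derivation.commutator_apply, pderiv_X, pderiv_X, Derivation.zero_apply]
      simp [Pi.single_apply, apply_ite]
  rw [← sub_eq_zero, ← Derivation.commutator_apply, this, Derivation.zero_apply]

-- Rows `0` and `1` are placeholders: `nambuBracket` overwrites them with `F` and `G`.
noncomputable def njpRows (n : ℕ) (f : Fin (n - 2) → MvPolynomial (Fin n) ℂ) (j : Fin n) :
    MvPolynomial (Fin n) ℂ :=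
  if h : (j : ℕ) < 2 then 0 else f ⟨j - 2, by omega⟩

theorem njpBracket_eq_nambuBracket {n : ℕ} (hn : 2 ≤ n)
    (f : Fin (n - 2) → MvPolynomial (Fin n) ℂ) (F G : MvPolynomial (Fin n) ℂ) :
    njpBracket n f F G
      = nambuBracket pderiv (njpRows n f) ⟨0, by omega⟩ ⟨1, by omega⟩ F G := by
  unfold njpBracket nambuBracket jacobianMatrix
  congr 1
  ext j k
  rcases j with ⟨_ | _ | j, hj⟩ <;> simp [update_apply, Fin.ext_iff, njpRows]

/-- The Nambu–Jacobi–Poisson bracket makes `ℂ[x₁, …, x_n]` (with `n ≥ 2`) a Poisson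
algebra: it is `ℂ`-bilinear, antisymmetric, satisfies the Leibniz rule, and satisfies
the Jacobi identity. -/
theorem njpBracket_poisson (n : ℕ) (hn : 2 ≤ n)
    (f : Fin (n - 2) → MvPolynomial (Fin n) ℂ) :
    (∀ (c : ℂ) (F F' G : MvPolynomial (Fin n) ℂ),
        njpBracket n f (c • F + F') G = c • njpBracket n f F G + njpBracket n f F' G) ∧
    (∀ (c : ℂ) (F G G' : MvPolynomial (Fin n) ℂ),
        njpBracket n f F (c • G + G') = c • njpBracket n f F G + njpBracket n f F G') ∧
    (∀ F G : MvPolynomial (Fin n) ℂ, njpBracket n f F G = - njpBracket n f G F) ∧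
    (∀ F G H : MvPolynomial (Fin n) ℂ,
        njpBracket n f (F * G) H = F * njpBracket n f G H + njpBracket n f F H * G) ∧
    (∀ F G H : MvPolynomial (Fin n) ℂ,
        njpBracket n f (njpBracket n f F G) H + njpBracket n f (njpBracket n f G H) F +
          njpBracket n f (njpBracket n f H F) G = 0) := by
  have h01 : (⟨0, by omega⟩ : Fin n) ≠ ⟨1, by omega⟩ := by simp [Fin.ext_iff]
  simp only [njpBracket_eq_nambuBracket hn]
  refine ⟨fun c F F' G => ?_, fun c F G G' => ?_, nambuBracket_swap _ _ h01,
    nambuBracket_mul_left _ _ h01,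
    nambuBracket_jacobi _ _ h01 pderiv_pderiv_comm⟩
  · simp only [nambuBracket_eq_hamiltonian_left _ _ h01, map_add, Derivation.map_smul]
  · simp only [nambuBracket_eq_hamiltonian_right, map_add, Derivation.map_smul]
end

section
/- Let K be a field of characteristic 0 and g a finite-dimensional Lie algebra over K. Then the canonical map ε : g → U(g) from g into its universal enveloping algebra is injective (Poincaré–Birkhoff–Witt). -/
attribute [local instance 100] LieRing.ofAssociativeRing

/-!
The Lie algebra `L` acts on the free module with basis the sorted monomials `z_w` of its
symmetric algebra (with respect to an ordered basis `x_i`): `x_i` sends `z_w` to `z_{i :: w}` when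
`i` is at most every letter of `w`, and otherwise, writing `w = j :: t` with `j < i`, by the
formula `x_i z_w = x_j (x_i z_t) + [x_i, x_j] z_t` that the PBW relations force. An induction on
the degree shows that this is well defined and that `x_i z_w` equals `z_{insert i w}` modulo
monomials of lower degree; a second induction on the degree, using the Jacobi identity, shows that
the action respects brackets. The resulting representation factors through `U(L)`, and `x` can be
read off from `x • z_[]`, whose degree-one coefficients are the coordinates of `x`.
-/

theorem List.orderedInsert_eq_cons_of_forall_le {α : Type*} {r : α → α → Prop} [DecidableRel r]
    {w : List α} {i : α} (hi : ∀ a ∈ w, r i a) : w.orderedInsert r i = i :: w := by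
  rcases w with _ | ⟨j, t⟩
  · rfl
  · exact List.orderedInsert_cons_of_le _ _ (hi j List.mem_cons_self)

namespace PBW

open Finsupp

variable {R L ι : Type*} [CommRing R] [LieRing L] [LieAlgebra R L] [LinearOrder ι]
  (b : Module.Basis ι R L)

/-- `x_i z_w`, computed with fuel `n` to make the recursion structural; any `n > w.length` gives
the same value (`actSpec`). Unsorted lists are sent to `0`. -/
noncomputable def actFuel : ℕ → ι → List ι → List ι →₀ R
  | 0, _, _ => 0
  | _ + 1, i, [] => single [i] 1
  | n + 1, i, j :: t =>
    if (j :: t).Pairwise (· ≤ ·) then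
      if i ≤ j then single (i :: j :: t) 1
      else (actFuel n i t).sum (fun u c => c • actFuel n j u)
        + (b.repr ⁅b i, b j⁆).sum fun m c => c • actFuel n m t
    else 0

noncomputable def act (i : ι) : Module.End R (List ι →₀ R) :=
  Finsupp.lift _ R _ fun w => actFuel b (w.length + 1) i w

noncomputable def rep : L →ₗ[R] Module.End R (List ι →₀ R) :=
  b.constr R (act b)

variable (R ι) in
def filtration (p : ℕ) : Submodule R (List ι →₀ R) :=
  supported R R {w | w.Pairwise (· ≤ ·) ∧ w.length ≤ p}

variable {b}

lemma actFuel_of_not_sorted {w : List ι} (hw : ¬ w.Pairwise (· ≤ ·)) (n : ℕ) (i : ι) :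
    actFuel b n i w = 0 := by
  rcases n with _ | n
  · rfl
  rcases w with _ | ⟨j, t⟩
  · exact absurd .nil hw
  · simp only [actFuel, if_neg hw]

lemma actFuel_of_forall_le {w : List ι} (hw : w.Pairwise (· ≤ ·)) {i : ι} (hi : ∀ a ∈ w, i ≤ a)
    (n : ℕ) : actFuel b (n + 1) i w = single (i :: w) 1 := by
  rcases w with _ | ⟨j, t⟩
  · rfl
  · simp only [actFuel, if_pos hw, if_pos (hi j List.mem_cons_self)]

lemma actFuel_succ_cons_of_lt {j : ι} {t : List ι} (hw : (j :: t).Pairwise (· ≤ ·)) {i : ι}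
    (hji : j < i) (n : ℕ) :
    actFuel b (n + 1) i (j :: t) = (actFuel b n i t).sum (fun u c => c • actFuel b n j u)
      + (b.repr ⁅b i, b j⁆).sum fun m c => c • actFuel b n m t := by
  simp only [actFuel, if_pos hw, if_neg hji.not_ge]

lemma act_apply (i : ι) (v : List ι →₀ R) :
    act b i v = v.sum fun u c => c • actFuel b (u.length + 1) i u := by
  simp [act, Finsupp.lift_apply]

lemma act_single (i : ι) (w : List ι) : act b i (single w 1) = actFuel b (w.length + 1) i w := by
  simp [act_apply]

lemma act_single_of_forall_le {w : List ι} (hw : w.Pairwise (· ≤ ·)) {i : ι}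
    (hi : ∀ a ∈ w, i ≤ a) : act b i (single w 1) = single (i :: w) 1 := by
  rw [act_single, actFuel_of_forall_le hw hi]

lemma rep_basis (i : ι) : rep b (b i) = act b i :=
  b.constr_basis R _ i

lemma rep_apply (x : L) (v : List ι →₀ R) :
    rep b x v = (b.repr x).sum fun m c => c • act b m v := by
  simp [rep, Module.Basis.constr_apply, Finsupp.sum, LinearMap.sum_apply]

lemma single_mem_filtration {w : List ι} (hw : w.Pairwise (· ≤ ·)) {p : ℕ} (hp : w.length ≤ p)
    (c : R) : single w c ∈ filtration R ι p :=
  single_mem_supported R c ⟨hw, hp⟩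

lemma filtration_mono : Monotone (filtration R ι) :=
  fun _ _ hpq => supported_mono fun _ hw => ⟨hw.1, hw.2.trans hpq⟩

lemma forall_le_of_le_head {i j : ι} {t : List ι} (hw : (j :: t).Pairwise (· ≤ ·)) (hij : i ≤ j) :
    ∀ a ∈ j :: t, i ≤ a := by
  simpa [hij] using fun a ha => hij.trans (List.rel_of_pairwise_cons hw ha)

lemma forall_le_of_mem_orderedInsert {i j : ι} {t : List ι} (hw : (j :: t).Pairwise (· ≤ ·))
    (hji : j ≤ i) : ∀ a ∈ t.orderedInsert (· ≤ ·) i, j ≤ a := by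
  simpa [hji] using fun a ha => List.rel_of_pairwise_cons hw ha

variable (b) in
def ActSpec (p : ℕ) : Prop :=
  ∀ w : List ι, w.Pairwise (· ≤ ·) → w.length < p → ∀ i,
    (∀ k, w.length < k → actFuel b k i w = act b i (single w 1)) ∧
    act b i (single w 1) - single (w.orderedInsert (· ≤ ·) i) 1 ∈ filtration R ι w.length

namespace ActSpec

variable {p : ℕ}

lemma mono (h : ActSpec b p) {q : ℕ} (hqp : q ≤ p) : ActSpec b q :=
  fun w hw hq => h w hw (hq.trans_le hqp)

lemma act_mem_filtration (h : ActSpec b (p + 1)) (i : ι) {v : List ι →₀ R}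
    (hv : v ∈ filtration R ι p) : act b i v ∈ filtration R ι (p + 1) := by
  rw [filtration, supported_eq_span_single] at hv
  induction hv using Submodule.span_induction with
  | mem _ hu =>
    obtain ⟨u, ⟨hu, hup⟩, rfl⟩ := hu
    rw [← sub_add_cancel (act b i (single u 1)) (single (u.orderedInsert (· ≤ ·) i) 1)]
    refine add_mem (filtration_mono (by omega) ((h u hu (by omega) i).2)) ?_
    exact single_mem_filtration (hu.orderedInsert i u) (by rw [List.orderedInsert_length]; omega) 1
  | zero => rw [map_zero]; exact zero_mem _
  | add _ _ _ _ h₁ h₂ => simpa using add_mem h₁ h₂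
  | smul c _ _ h => simpa using Submodule.smul_mem _ c h

lemma rep_mem_filtration (h : ActSpec b (p + 1)) (x : L) {v : List ι →₀ R}
    (hv : v ∈ filtration R ι p) : rep b x v ∈ filtration R ι (p + 1) := by
  rw [rep_apply]
  exact sum_mem fun k _ => Submodule.smul_mem _ _ (h.act_mem_filtration k hv)

lemma sum_actFuel_eq_act (h : ActSpec b (p + 1)) (j : ι) {k : ℕ} (hk : p < k) {v : List ι →₀ R}
    (hv : v ∈ filtration R ι p) :
    (v.sum fun u c => c • actFuel b k j u) = act b j v := by
  rw [act_apply]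
  refine sum_congr fun u hu => ?_
  obtain ⟨hu, hup⟩ := (mem_supported R v).1 hv hu
  rw [(h u hu (by omega) j).1 k (by omega), act_single]

lemma actFuel_cons_of_lt {j : ι} {t : List ι} (h : ActSpec b (t.length + 1))
    (hw : (j :: t).Pairwise (· ≤ ·)) {i : ι} (hji : j < i) {k : ℕ} (hk : t.length < k) :
    actFuel b (k + 1) i (j :: t)
      = act b j (act b i (single t 1)) + rep b ⁅b i, b j⁆ (single t 1) := by
  obtain ⟨hfuel, hrem⟩ := h t hw.of_cons (Nat.lt_succ_self _) i
  have hj := forall_le_of_mem_orderedInsert hw hji.le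
  obtain ⟨k, rfl⟩ := Nat.exists_eq_add_of_lt hk
  rw [actFuel_succ_cons_of_lt hw hji, hfuel _ hk, rep_apply,
    ← sub_add_cancel (act b i (single t 1)) (single (t.orderedInsert (· ≤ ·) i) 1),
    sum_add_index' (by simp) (fun _ _ _ => add_smul _ _ _), map_add,
    h.sum_actFuel_eq_act j hk hrem, sum_single_index (by simp), one_smul,
    act_single_of_forall_le (hw.of_cons.orderedInsert i t) hj,
    actFuel_of_forall_le (hw.of_cons.orderedInsert i t) hj]
  congr 1
  exact sum_congr fun l _ => by rw [(h t hw.of_cons (Nat.lt_succ_self _) l).1 _ hk]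

end ActSpec

lemma actSpec_succ {n : ℕ} (h : ActSpec b n) : ActSpec b (n + 1) := by
  intro w hw hwn i
  by_cases hi : ∀ a ∈ w, i ≤ a
  · refine ⟨fun k hk => ?_, ?_⟩
    · obtain ⟨k, rfl⟩ := Nat.exists_eq_add_of_lt hk
      rw [actFuel_of_forall_le hw hi, act_single_of_forall_le hw hi]
    · simp [act_single_of_forall_le hw hi, List.orderedInsert_eq_cons_of_forall_le hi]
  obtain ⟨j, t, rfl⟩ : ∃ j t, w = j :: t := by
    rcases w with _ | ⟨j, t⟩
    · simp at hi
    · exact ⟨j, t, rfl⟩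
  have hji : j < i := lt_of_not_ge fun hij => hi (forall_le_of_le_head hw hij)
  have ht : ActSpec b (t.length + 1) := h.mono (by simp at hwn; omega)
  have hact : act b i (single (j :: t) 1)
      = act b j (act b i (single t 1)) + rep b ⁅b i, b j⁆ (single t 1) := by
    rw [act_single, List.length_cons, ht.actFuel_cons_of_lt hw hji (Nat.lt_succ_self _)]
  refine ⟨fun k hk => ?_, ?_⟩
  · obtain ⟨k, rfl⟩ := Nat.exists_eq_add_of_lt hk
    rw [hact, ht.actFuel_cons_of_lt hw hji (by simp at hk ⊢; omega)]
  · rw [hact, List.orderedInsert_of_not_le _ _ hji.not_ge, add_sub_right_comm,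
      ← act_single_of_forall_le (b := b) (hw.of_cons.orderedInsert i t)
        (forall_le_of_mem_orderedInsert hw hji.le), ← map_sub]
    have h1 := ht.act_mem_filtration j (ht t hw.of_cons (Nat.lt_succ_self _) i).2
    have h2 := ht.rep_mem_filtration ⁅b i, b j⁆ (single_mem_filtration hw.of_cons le_rfl 1)
    exact add_mem h1 h2

variable (b) in
lemma actSpec (n : ℕ) : ActSpec b n := by
  induction n with
  | zero => exact fun w _ hw => absurd hw (Nat.not_lt_zero _)
  | succ n ih => exact actSpec_succ ih

lemma act_cons_of_lt {j : ι} {t : List ι} (hw : (j :: t).Pairwise (· ≤ ·)) {i : ι}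
    (hji : j < i) :
    act b i (single (j :: t) 1)
      = act b j (act b i (single t 1)) + rep b ⁅b i, b j⁆ (single t 1) := by
  rw [act_single, List.length_cons, (actSpec b _).actFuel_cons_of_lt hw hji (Nat.lt_succ_self _)]

lemma rep_basis_single_sub_mem {w : List ι} (hw : w.Pairwise (· ≤ ·)) (i : ι) :
    rep b (b i) (single w 1) - single (w.orderedInsert (· ≤ ·) i) 1 ∈ filtration R ι w.length :=
  rep_basis (b := b) i ▸ (actSpec b _ w hw (Nat.lt_succ_self _) i).2

lemma rep_single_of_not_sorted {w : List ι} (hw : ¬ w.Pairwise (· ≤ ·)) (x : L) (c : R) :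
    rep b x (single w c) = 0 := by
  simp [rep_apply, act_apply, actFuel_of_not_sorted hw]

variable (b) in
noncomputable def defect : L →ₗ[R] L →ₗ[R] Module.End R (List ι →₀ R) :=
  LinearMap.mk₂ R (fun x y => rep b ⁅x, y⁆ - (rep b x * rep b y - rep b y * rep b x))
    (fun x x' y => by simp only [add_lie, map_add, add_mul, mul_add]; abel)
    (fun c x y => by simp only [smul_lie, map_smul, smul_mul_assoc, mul_smul_comm]; module)
    (fun x y y' => by simp only [lie_add, map_add, add_mul, mul_add]; abel)
    (fun c x y => by simp only [lie_smul, map_smul, smul_mul_assoc, mul_smul_comm]; module)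

lemma defect_apply (x y : L) (v : List ι →₀ R) :
    defect b x y v = rep b ⁅x, y⁆ v - (rep b x (rep b y v) - rep b y (rep b x v)) := rfl

lemma rep_rep_of_defect_eq_zero {x y : L} {v : List ι →₀ R} (h : defect b x y v = 0) :
    rep b x (rep b y v) = rep b y (rep b x v) + rep b ⁅x, y⁆ v := by
  rw [defect_apply] at h
  rw [← sub_eq_zero, ← neg_eq_zero, ← h]
  abel

lemma defect_swap (x y : L) : defect b y x = -defect b x y := by
  refine LinearMap.ext fun v => ?_
  simp only [defect_apply, LinearMap.neg_apply, ← lie_skew x y, map_neg]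
  abel

lemma defect_apply_eq_zero_of_basis {v : List ι →₀ R} (h : ∀ i j, defect b (b i) (b j) v = 0)
    (x y : L) : defect b x y v = 0 := by
  have : (defect b).compr₂ (LinearMap.applyₗ v) = 0 := LinearMap.ext_basis b b h
  exact congr($this x y)

lemma defect_basis_single_of_le {w : List ι} (hw : w.Pairwise (· ≤ ·)) {i j : ι} (hji : j ≤ i)
    (hj : ∀ a ∈ w, j ≤ a) : defect b (b i) (b j) (single w 1) = 0 := by
  rcases hji.eq_or_lt with rfl | hji
  · simp [defect_apply]
  rw [defect_apply, rep_basis, rep_basis, act_single_of_forall_le hw hj,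
    act_cons_of_lt (List.pairwise_cons.2 ⟨hj, hw⟩) hji]
  abel

lemma rep_single_cons {l : ι} {t : List ι} (hw : (l :: t).Pairwise (· ≤ ·)) (y : L) :
    rep b y (single (l :: t) 1)
      = rep b (b l) (rep b y (single t 1)) + rep b ⁅y, b l⁆ (single t 1) := by
  have hl : ∀ a ∈ t, l ≤ a := fun a ha => List.rel_of_pairwise_cons hw ha
  induction b.mem_span y using Submodule.span_induction with
  | mem _ hy =>
    obtain ⟨i, rfl⟩ := hy
    rcases le_or_gt i l with hil | hli
    · have h := rep_rep_of_defect_eq_zero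
        (defect_basis_single_of_le (b := b) hw.of_cons hil fun a ha => hil.trans (hl a ha))
      rw [rep_basis l, act_single_of_forall_le hw.of_cons hl, ← rep_basis (b := b) l] at h
      rw [h, ← lie_skew, map_neg, LinearMap.neg_apply]
      abel
    · rw [rep_basis, act_cons_of_lt hw hli, rep_basis]
  | zero => simp
  | add y y' _ _ h h' => simp only [map_add, add_lie, LinearMap.add_apply, h, h']; abel
  | smul c y _ h => simp only [map_smul, smul_lie, LinearMap.smul_apply, h, smul_add]

lemma filtration_le_ker_defect {p : ℕ} (h : ∀ u : List ι, u.Pairwise (· ≤ ·) → u.length ≤ p →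
    ∀ x y, defect b x y (single u 1) = 0) (x y : L) :
    filtration R ι p ≤ LinearMap.ker (defect b x y) := by
  rw [filtration, supported_eq_span_single, Submodule.span_le]
  rintro _ ⟨u, ⟨hu, hup⟩, rfl⟩
  exact h u hu hup x y

lemma defect_basis_single_cons {l : ι} {t : List ι} (hw : (l :: t).Pairwise (· ≤ ·))
    (ih : ∀ x y, filtration R ι t.length ≤ LinearMap.ker (defect b x y)) {i j : ι}
    (hli : l ≤ i) (hlj : l ≤ j) : defect b (b i) (b j) (single (l :: t) 1) = 0 := by
  have ht : ∀ x y, defect b x y (single t 1) = 0 := fun x y =>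
    ih x y (single_mem_filtration hw.of_cons le_rfl 1)
  have hcomm : ∀ m k, l ≤ m → l ≤ k → defect b (b m) (b l) (rep b (b k) (single t 1)) = 0 := by
    intro m k hm hk
    rw [← sub_add_cancel (rep b (b k) (single t 1)) (single (t.orderedInsert (· ≤ ·) k) 1),
      map_add, ih _ _ (rep_basis_single_sub_mem hw.of_cons k), zero_add]
    exact defect_basis_single_of_le (hw.of_cons.orderedInsert k t) hm
      (forall_le_of_mem_orderedInsert hw hk)
  have jacobi : ⁅⁅b i, b j⁆, b l⁆ = ⁅b i, ⁅b j, b l⁆⁆ - ⁅b j, ⁅b i, b l⁆⁆ := by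
    rw [leibniz_lie]; abel
  -- Move `x_l` to the front of `x_i x_j z_{l :: t}` and `x_j x_i z_{l :: t}`; the commutators
  -- this produces cancel up to `[[x_i, x_j], x_l]`, by the Jacobi identity.
  rw [defect_apply, rep_single_cons hw, rep_single_cons hw, rep_single_cons hw, map_add, map_add,
    rep_rep_of_defect_eq_zero (hcomm i j hli hlj), rep_rep_of_defect_eq_zero (hcomm j i hlj hli),
    rep_rep_of_defect_eq_zero (ht (b i) ⁅b j, b l⁆),
    rep_rep_of_defect_eq_zero (ht (b j) ⁅b i, b l⁆), rep_rep_of_defect_eq_zero (ht (b i) (b j)),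
    jacobi, map_sub, LinearMap.sub_apply, map_add]
  abel

lemma defect_single_eq_zero_of_length_lt (n : ℕ) : ∀ w : List ι, w.Pairwise (· ≤ ·) →
    w.length < n → ∀ x y, defect b x y (single w 1) = 0 := by
  induction n with
  | zero => exact fun w _ hw => absurd hw (Nat.not_lt_zero _)
  | succ n ih =>
    intro w hw hwn
    refine defect_apply_eq_zero_of_basis fun i j => ?_
    wlog hji : j ≤ i generalizing i j
    · rw [defect_swap, LinearMap.neg_apply, this j i (le_of_not_ge hji), neg_zero]
    rcases w with _ | ⟨l, t⟩
    · exact defect_basis_single_of_le .nil hji (by simp)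
    rcases le_total j l with hjl | hlj
    · exact defect_basis_single_of_le hw hji (forall_le_of_le_head hw hjl)
    · refine defect_basis_single_cons hw (filtration_le_ker_defect fun u hu hut => ?_)
        (hlj.trans hji) hlj
      exact ih u hu (by simp at hwn; omega)

lemma defect_eq_zero (x y : L) : defect b x y = 0 := by
  refine Finsupp.lhom_ext fun w c => ?_
  by_cases hw : w.Pairwise (· ≤ ·)
  · rw [← smul_single_one, map_smul,
      defect_single_eq_zero_of_length_lt _ w hw (Nat.lt_succ_self _), smul_zero, map_smul,
      LinearMap.zero_apply, smul_zero]
  · simp [defect_apply, rep_single_of_not_sorted hw]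

lemma rep_lie (x y : L) : rep b ⁅x, y⁆ = ⁅rep b x, rep b y⁆ := by
  rw [Ring.lie_def (rep b x), ← sub_eq_zero]
  exact defect_eq_zero x y

variable (b) in
noncomputable def lieRep : L →ₗ⁅R⁆ Module.End R (List ι →₀ R) :=
  { rep b with map_lie' := rep_lie _ _ }

lemma rep_single_nil (x : L) : rep b x (single [] 1) = (b.repr x).mapDomain fun i => [i] := by
  simp [rep_apply, act_single_of_forall_le List.Pairwise.nil, mapDomain]

lemma lieRep_injective : Function.Injective (lieRep b) := fun x y h => by
  have h' : rep b x (single [] 1) = rep b y (single [] 1) := congr($h (single [] 1))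
  rw [rep_single_nil, rep_single_nil] at h'
  exact b.repr.injective (mapDomain_injective List.singleton_injective h')

end PBW

theorem UniversalEnvelopingAlgebra.ι_injective_of_free (R L : Type*) [CommRing R] [LieRing L]
    [LieAlgebra R L] [Module.Free R L] :
    Function.Injective (ι R : L →ₗ⁅R⁆ UniversalEnvelopingAlgebra R L) := by
  let b := Module.Free.chooseBasis R L
  let _ := IsWellOrder.linearOrder (α := Module.Free.ChooseBasisIndex R L) WellOrderingRel
  intro x y hxy
  apply PBW.lieRep_injective (b := b)
  simpa using congr(lift R (PBW.lieRep b) $hxy)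

theorem pbw_injective_general (K L : Type*) [Field K]
    [LieRing L] [LieAlgebra K L] :
    Function.Injective (UniversalEnvelopingAlgebra.ι K : L →ₗ⁅K⁆ UniversalEnvelopingAlgebra K L) :=
  UniversalEnvelopingAlgebra.ι_injective_of_free K L

/-- **Poincaré–Birkhoff–Witt.** For a finite-dimensional Lie algebra `L` over a field
`K` of characteristic `0`, the canonical map `ε : L → U(L)` into the universal
enveloping algebra is injective. -/
theorem pbw_injective (K L : Type*) [Field K] [CharZero K]
    [LieRing L] [LieAlgebra K L] [FiniteDimensional K L] :
    Function.Injective (UniversalEnvelopingAlgebra.ι K : L →ₗ⁅K⁆ UniversalEnvelopingAlgebra K L) :=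
  pbw_injective_general K L
end
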